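/- Let {P_α : α < κ} be a projectional sequence in a Banach space X and let D ⊆ X* be a norming linear subspace such that D = ⋃_{α<κ} P_α* D and (P_α X, P_α* D) is a Plichko pair for each α < κ. Assume moreover that each P_α* D is weak* countably tight (e.g. contained in a Σ-space). Then (X, D) is a Plichko pair. -/

import Mathlib

open NormedSpace

/-- The norm of the restriction of a functional `φ` to a subset `Y ⊆ X`. -/
noncomputable def restrNorm {X : Type*} [NormedAddCommGroup X] [NormedSpace ℝ X]
    (Y : Set X) (φ : X →L[ℝ] ℝ) : ℝ :=
  sSup {t : ℝ | ∃ y ∈ Y, ‖y‖ ≤ 1 ∧ t = |φ y|}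

/-- `(Y, E)` is a Plichko pair (for a subspace `Y ⊆ X` and a set of functionals
`E ⊆ X*`, acting on `Y` by restriction): the restrictions of `E` are norming for
`Y` and there is a linearly dense `A ⊆ Y` whose `E`-supports are countable. -/
def IsPlichkoPairOn {X : Type*} [NormedAddCommGroup X] [NormedSpace ℝ X]
    (Y : Set X) (E : Set (X →L[ℝ] ℝ)) : Prop :=
  (∃ c > (0:ℝ), ∀ y ∈ Y, c * ‖y‖ ≤
    sSup {t : ℝ | ∃ φ ∈ E, restrNorm Y φ ≠ 0 ∧ t = |φ y| / restrNorm Y φ}) ∧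
  ∃ A ⊆ Y, Y ⊆ closure (Submodule.span ℝ A : Set X) ∧
    ∀ φ ∈ E, {a ∈ A | φ a ≠ 0}.Countable

/-!
Each `P η X` has a generating set `G η` whose `D`-supports are countable. The set
`G 0 ∪ ⋃ ρ, (I - P ρ) '' G (ρ + 1)` is linearly dense by transfinite induction, and for `φ ∈ D`
its support only meets the pieces with `φ ∘ P (ρ + 1) ≠ φ ∘ P ρ`. There are countably many such
jumps: at a limit `ν` of uncountable cofinality, `φ ∘ P ν` is the weak* limit of the `φ ∘ P μ`,
`μ < ν`, hence by countable tightness of countably many of them, which all factor through some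
`P β` with `β < ν`; then `φ ∘ P δ` is constant for `δ ∈ [β + 1, ν)`.
-/

open Set Order Filter Topology Submodule

lemma ContinuousLinearMap.image_closure_span_subset {R M M₂ : Type*} [Semiring R]
    [AddCommMonoid M] [Module R M] [TopologicalSpace M]
    [AddCommMonoid M₂] [Module R M₂] [TopologicalSpace M₂]
    (f : M →L[R] M₂) (s : Set M) :
    f '' closure (span R s) ⊆ closure (span R (f '' s)) :=
  (image_closure_subset_closure_image f.continuous).trans
    (closure_mono (image_span_subset_span (f : M →ₗ[R] M₂) s))

def IsCountablyTight {Y : Type*} [TopologicalSpace Y] (K : Set Y) : Prop :=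
  ∀ A ⊆ K, ∀ p ∈ K, p ∈ closure A → ∃ A₀ ⊆ A, A₀.Countable ∧ p ∈ closure A₀

section

variable {X : Type*} [NormedAddCommGroup X] [NormedSpace ℝ X]
  {κ : Ordinal} {P : Ordinal → X →L[ℝ] X}

def IsProjectionalChain (κ : Ordinal) (P : Ordinal → X →L[ℝ] X) : Prop :=
  ∀ ξ η, ξ < η → η < κ → (P ξ).comp (P η) = P ξ ∧ (P η).comp (P ξ) = P ξ

def incrementSet (κ : Ordinal) (P : Ordinal → X →L[ℝ] X) (G : Ordinal → Set X) : Set X :=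
  G 0 ∪ ⋃ (ρ) (_ : succ ρ < κ), (fun g => g - P ρ g) '' G (succ ρ)

theorem forall_range_subset_of_succ {S : Set X} (hS : IsClosed S)
    (hlimit : ∀ δ, δ < κ → IsSuccLimit δ → range (P δ) = closure (⋃ ξ < δ, range (P ξ)))
    (hzero : 0 < κ → range (P 0) ⊆ S)
    (hsucc : ∀ ρ, succ ρ < κ → range (P ρ) ⊆ S → range (P (succ ρ)) ⊆ S) :
    ∀ α < κ, range (P α) ⊆ S := by
  intro α
  induction α using SuccOrder.limitRecOn with
  | isMin α hα => rw [hα.eq_bot]; exact hzero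
  | succ ρ _ ih => exact fun hρ => hsucc ρ hρ (ih ((lt_succ ρ).trans hρ))
  | isSuccLimit δ hδ ih =>
    intro hδκ
    rw [hlimit δ hδκ hδ]
    exact closure_minimal (iUnion₂_subset fun ξ hξ => ih ξ hξ (hξ.trans hδκ)) hS

theorem closure_span_incrementSet {G : Ordinal → Set X}
    (hlimit : ∀ δ, δ < κ → IsSuccLimit δ → range (P δ) = closure (⋃ ξ < δ, range (P ξ)))
    (hcover : closure (⋃ ξ < κ, range (P ξ)) = univ)
    (hPG : ∀ α < κ, range (P α) ⊆ closure (span ℝ (G α))) :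
    closure (span ℝ (incrementSet κ P G) : Set X) = univ := by
  set S := (span ℝ (incrementSet κ P G)).topologicalClosure
  have hS : IsClosed (S : Set X) := (span ℝ _).isClosed_topologicalClosure
  have hAS : incrementSet κ P G ⊆ S := subset_span.trans (span ℝ _).le_topologicalClosure
  have hGS : ∀ α < κ, G α ⊆ S → range (P α) ⊆ S := fun α hα h =>
    (hPG α hα).trans (closure_minimal (span_le.2 h) hS)
  rw [← (span ℝ _).topologicalClosure_coe, ← univ_subset_iff, ← hcover]
  refine closure_minimal (iUnion₂_subset (forall_range_subset_of_succ hS hlimit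
    (fun h0 => hGS 0 h0 (subset_union_left.trans hAS)) fun ρ hρ ih => hGS _ hρ fun g hg => ?_)) hS
  have h1 : g - P ρ g ∈ S := hAS (Or.inr (mem_iUnion₂.2 ⟨ρ, hρ, g, hg, rfl⟩))
  simpa using S.add_mem h1 (ih (mem_range_self g))

namespace IsProjectionalChain

variable {ξ η γ : Ordinal}

lemma apply_apply_of_lt_left (hP : IsProjectionalChain κ P) (hξη : ξ < η) (hη : η < κ) (x : X) :
    P ξ (P η x) = P ξ x :=
  DFunLike.congr_fun (hP ξ η hξη hη).1 x

lemma apply_apply_of_lt_right (hP : IsProjectionalChain κ P) (hξη : ξ < η) (hη : η < κ) (x : X) :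
    P η (P ξ x) = P ξ x :=
  DFunLike.congr_fun (hP ξ η hξη hη).2 x

lemma range_subset_fixedPoints (hP : IsProjectionalChain κ P) (hξη : ξ < η) (hη : η < κ) :
    range (P ξ) ⊆ {x | P η x = x} := by
  rintro _ ⟨x, rfl⟩
  exact hP.apply_apply_of_lt_right hξη hη x

lemma comp_comp_of_lt (hP : IsProjectionalChain κ P) (hξη : ξ < η) (hη : η < κ)
    (φ : X →L[ℝ] ℝ) : (φ.comp (P ξ)).comp (P η) = φ.comp (P ξ) := by
  rw [ContinuousLinearMap.comp_assoc, (hP ξ η hξη hη).1]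

lemma comp_eq_of_le (hP : IsProjectionalChain κ P) {φ : X →L[ℝ] ℝ}
    (hφ : φ.comp (P γ) = φ) (hγη : γ ≤ η) (hη : η < κ) : φ.comp (P η) = φ := by
  rcases hγη.lt_or_eq with h | rfl
  · conv_lhs => rw [← hφ]
    rw [hP.comp_comp_of_lt h hη, hφ]
  · exact hφ

/-- `P η` need not be idempotent, so a generating set of `P (η + 1) X` is pushed down by `P η`
instead of taking the one of `P η X`. -/
theorem exists_generating_subset (hP : IsProjectionalChain κ P) {D : Set (X →L[ℝ] ℝ)}
    (hDstable : ∀ α, α < κ → ∀ φ ∈ D, φ.comp (P α) ∈ D)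
    (hDunion : ∀ φ ∈ D, ∃ α, α < κ ∧ φ.comp (P α) = φ)
    (hPlichko : ∀ α, α < κ →
      IsPlichkoPairOn (range (P α)) {ψ | ∃ φ ∈ D, ψ = φ.comp (P α)})
    (hη : η < κ) :
    ∃ G ⊆ range (P η), range (P η) ⊆ closure (span ℝ G) ∧
      ∀ φ ∈ D, {g ∈ G | φ g ≠ 0}.Countable := by
  by_cases hsucc : succ η < κ
  · obtain ⟨-, A, -, hA, hAc⟩ := hPlichko _ hsucc
    have hPη := hP.apply_apply_of_lt_left (lt_succ η) hsucc
    refine ⟨P η '' A, image_subset_range _ _, ?_, fun φ hφ => ?_⟩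
    · rintro _ ⟨x, rfl⟩
      rw [← hPη]
      exact (P η).image_closure_span_subset A (mem_image_of_mem _ (hA (mem_range_self x)))
    · refine ((hAc _ ⟨_, hDstable η hη φ hφ, rfl⟩).image (P η)).mono ?_
      rintro _ ⟨⟨a, ha, rfl⟩, h⟩
      exact ⟨a, ⟨ha, by simpa only [ContinuousLinearMap.comp_apply, hPη] using h⟩, rfl⟩
  · obtain ⟨-, A, hAP, hA, hAc⟩ := hPlichko η hη
    refine ⟨A, hAP, hA, fun φ hφ => ?_⟩
    obtain ⟨γ, hγκ, hγ⟩ := hDunion φ hφ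
    have hγη : γ ≤ η := le_of_not_gt fun h => hsucc ((succ_le_of_lt h).trans_lt hγκ)
    simpa only [hP.comp_eq_of_le hγ hγη hη] using hAc _ ⟨φ, hφ, rfl⟩

-- `hν` and `hbdd` together say that `ν` has uncountable cofinality.
theorem exists_apply_eq_of_countably_bounded (hP : IsProjectionalChain κ P)
    (hlimit : ∀ δ, δ < κ → IsSuccLimit δ → range (P δ) = closure (⋃ ξ < δ, range (P ξ)))
    {ν : Ordinal} (hνκ : ν < κ) (hν : IsSuccLimit ν)
    (hbdd : ∀ S ⊆ Iio ν, S.Countable → ∃ β < ν, ∀ ξ ∈ S, ξ ≤ β) (x : X) :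
    ∃ ξ < ν, ∀ δ, ξ < δ → δ < ν → P δ x = P ν x := by
  have hx : P ν x ∈ closure (⋃ ξ < ν, range (P ξ)) := hlimit ν hνκ hν ▸ mem_range_self x
  obtain ⟨u, hu, hux⟩ := mem_closure_iff_seq_limit.1 hx
  choose ξ hξν hξu using fun n => mem_iUnion₂.1 (hu n)
  obtain ⟨β, hβν, hβ⟩ := hbdd (range ξ) (range_subset_iff.2 hξν) (countable_range ξ)
  have hβ' : succ β < κ := (hν.succ_lt hβν).trans hνκ
  -- `P ν x` is a limit of points of `⋃ ξ ≤ β, P ξ X`, all fixed by the continuous map `P (β + 1)`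
  have hfix : P (succ β) (P ν x) = P ν x :=
    (isClosed_eq (P (succ β)).continuous continuous_id).mem_of_tendsto hux
      (Eventually.of_forall fun n =>
        hP.range_subset_fixedPoints ((hβ _ ⟨n, rfl⟩).trans_lt (lt_succ β)) hβ' (hξu n))
  refine ⟨succ β, hν.succ_lt hβν, fun δ hδ hδν => ?_⟩
  calc P δ x = P δ (P ν x) := (hP.apply_apply_of_lt_left hδν hνκ x).symm
    _ = P δ (P (succ β) (P ν x)) := by rw [hfix]
    _ = P ν x := by rw [hP.apply_apply_of_lt_right hδ (hδν.trans hνκ), hfix]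

theorem tendsto_toWeakDual_comp (hP : IsProjectionalChain κ P)
    (hlimit : ∀ δ, δ < κ → IsSuccLimit δ → range (P δ) = closure (⋃ ξ < δ, range (P ξ)))
    {ν : Ordinal} (hνκ : ν < κ) (hν : IsSuccLimit ν)
    (hbdd : ∀ S ⊆ Iio ν, S.Countable → ∃ β < ν, ∀ ξ ∈ S, ξ ≤ β) (φ : X →L[ℝ] ℝ) :
    Tendsto (fun μ : Iio ν => StrongDual.toWeakDual (φ.comp (P μ))) atTop
      (𝓝 (StrongDual.toWeakDual (φ.comp (P ν)))) := by
  rw [tendsto_iff_forall_eval_tendsto_topDualPairing]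
  intro x
  obtain ⟨ξ, hξν, hξ⟩ := hP.exists_apply_eq_of_countably_bounded hlimit hνκ hν hbdd x
  refine tendsto_const_nhds.congr'
    ((eventually_ge_atTop ⟨succ ξ, hν.succ_lt hξν⟩).mono fun μ hμ => ?_)
  change φ (P ν x) = φ (P μ x)
  rw [hξ μ (succ_le_iff.1 hμ) μ.2]

theorem exists_comp_eq_of_isCountablyTight (hP : IsProjectionalChain κ P)
    (hlimit : ∀ δ, δ < κ → IsSuccLimit δ → range (P δ) = closure (⋃ ξ < δ, range (P ξ)))
    {D : Set (X →L[ℝ] ℝ)} (hDstable : ∀ α, α < κ → ∀ φ ∈ D, φ.comp (P α) ∈ D)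
    {ν : Ordinal} (hνκ : ν < κ) (hν : IsSuccLimit ν)
    (hbdd : ∀ S ⊆ Iio ν, S.Countable → ∃ β < ν, ∀ ξ ∈ S, ξ ≤ β)
    (htight : IsCountablyTight (StrongDual.toWeakDual '' {ψ | ∃ φ ∈ D, ψ = φ.comp (P ν)}))
    {φ : X →L[ℝ] ℝ} (hφ : φ ∈ D) :
    ∃ β < ν, ∀ δ, β ≤ δ → δ < ν → φ.comp (P δ) = φ.comp (P ν) := by
  set f : Ordinal → WeakDual ℝ X := fun μ => StrongDual.toWeakDual (φ.comp (P μ))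
  have hfK : f '' Iio ν ⊆ StrongDual.toWeakDual '' {ψ | ∃ φ ∈ D, ψ = φ.comp (P ν)} := by
    rintro _ ⟨μ, hμ, rfl⟩
    exact ⟨_, ⟨_, hDstable μ (hμ.trans hνκ) φ hφ, (hP.comp_comp_of_lt hμ hνκ φ).symm⟩, rfl⟩
  have : Nonempty (Iio ν) := ⟨⟨0, hν.bot_lt⟩⟩
  have hfν : f ν ∈ closure (f '' Iio ν) :=
    mem_closure_of_tendsto (hP.tendsto_toWeakDual_comp hlimit hνκ hν hbdd φ)
      (Eventually.of_forall fun μ => mem_image_of_mem f μ.2)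
  obtain ⟨A₀, hA₀, hA₀c, hfνA₀⟩ := htight _ hfK _ ⟨_, ⟨φ, hφ, rfl⟩, rfl⟩ hfν
  choose! m hmν hm using fun q (hq : q ∈ A₀) => hA₀ hq
  obtain ⟨β, hβν, hβ⟩ := hbdd (m '' A₀) (image_subset_iff.2 hmν) (hA₀c.image m)
  have hβ' : succ β < κ := (hν.succ_lt hβν).trans hνκ
  -- the weak* closed set of functionals invariant under `P (β + 1)` contains `A₀`, hence `f ν`
  have hC : IsClosed {q : WeakDual ℝ X | ∀ x, q (P (succ β) x) = q x} := by
    simp only [ofPred_forall]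
    exact isClosed_iInter fun x => isClosed_eq (WeakDual.eval_continuous _)
      (WeakDual.eval_continuous _)
  have hA₀C : A₀ ⊆ {q : WeakDual ℝ X | ∀ x, q (P (succ β) x) = q x} := by
    intro q hq x
    rw [← hm q hq]
    exact congrArg φ
      (hP.apply_apply_of_lt_left ((hβ _ (mem_image_of_mem m hq)).trans_lt (lt_succ β)) hβ' x)
  have hνβ : ∀ x, φ (P (succ β) x) = φ (P ν x) := fun x => by
    have h : φ (P ν (P (succ β) x)) = φ (P ν x) := hC.closure_subset_iff.2 hA₀C hfνA₀ x
    rwa [hP.apply_apply_of_lt_right (hν.succ_lt hβν) hνκ] at h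
  refine ⟨succ β, hν.succ_lt hβν, fun δ hβδ hδν => ?_⟩
  ext x
  rcases hβδ.lt_or_eq with h | rfl
  · calc φ (P δ x) = φ (P (succ β) (P δ x)) := by
          rw [hνβ, hP.apply_apply_of_lt_right hδν hνκ]
      _ = φ (P ν x) := by rw [hP.apply_apply_of_lt_left h (hδν.trans hνκ), hνβ]
  · exact hνβ x

theorem countable_setOf_comp_succ_ne_inter_Iio (hP : IsProjectionalChain κ P)
    (hlimit : ∀ δ, δ < κ → IsSuccLimit δ → range (P δ) = closure (⋃ ξ < δ, range (P ξ)))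
    {D : Set (X →L[ℝ] ℝ)} (hDstable : ∀ α, α < κ → ∀ φ ∈ D, φ.comp (P α) ∈ D)
    (htight : ∀ α, α < κ →
      IsCountablyTight (StrongDual.toWeakDual '' {ψ | ∃ φ ∈ D, ψ = φ.comp (P α)}))
    {φ : X →L[ℝ] ℝ} (hφ : φ ∈ D) {ν : Ordinal} (hνκ : ν < κ) :
    ({ρ | φ.comp (P (succ ρ)) ≠ φ.comp (P ρ)} ∩ Iio ν).Countable := by
  induction ν using WellFoundedLT.induction with | _ ν ih => ?_
  rcases Ordinal.zero_or_succ_or_isSuccLimit ν with rfl | ⟨ρ, rfl⟩ | hν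
  · simp
  · refine ((ih ρ (lt_succ ρ) ((lt_succ ρ).trans hνκ)).union (countable_singleton ρ)).mono ?_
    rintro μ ⟨hμJ, hμρ⟩
    rcases (lt_succ_iff.1 (mem_Iio.1 hμρ)).lt_or_eq with h | rfl
    exacts [Or.inl ⟨hμJ, h⟩, Or.inr rfl]
  by_cases hbdd : ∀ S ⊆ Iio ν, S.Countable → ∃ β < ν, ∀ ξ ∈ S, ξ ≤ β
  · obtain ⟨β, hβν, hβ⟩ := hP.exists_comp_eq_of_isCountablyTight hlimit hDstable hνκ hν hbdd
      (htight ν hνκ) hφ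
    refine (ih β hβν (hβν.trans hνκ)).mono ?_
    rintro ρ ⟨hρJ, hρν⟩
    refine ⟨hρJ, mem_Iio.2 (lt_of_not_ge fun hβρ => hρJ ?_)⟩
    rw [hβ ρ hβρ hρν, hβ (succ ρ) (hβρ.trans (le_succ ρ)) (hν.succ_lt hρν)]
  · push Not at hbdd
    obtain ⟨S, hSν, hSc, hS⟩ := hbdd
    refine (hSc.biUnion fun ξ hξ => ih ξ (hSν hξ) ((hSν hξ).trans hνκ)).mono ?_
    rintro ρ ⟨hρJ, hρν⟩
    obtain ⟨ξ, hξS, hρξ⟩ := hS ρ hρν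
    exact mem_biUnion hξS ⟨hρJ, hρξ⟩

theorem countable_setOf_comp_succ_ne (hP : IsProjectionalChain κ P)
    (hlimit : ∀ δ, δ < κ → IsSuccLimit δ → range (P δ) = closure (⋃ ξ < δ, range (P ξ)))
    {D : Set (X →L[ℝ] ℝ)} (hDstable : ∀ α, α < κ → ∀ φ ∈ D, φ.comp (P α) ∈ D)
    (hDunion : ∀ φ ∈ D, ∃ α, α < κ ∧ φ.comp (P α) = φ)
    (htight : ∀ α, α < κ →
      IsCountablyTight (StrongDual.toWeakDual '' {ψ | ∃ φ ∈ D, ψ = φ.comp (P α)}))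
    {φ : X →L[ℝ] ℝ} (hφ : φ ∈ D) :
    {ρ | succ ρ < κ ∧ φ.comp (P (succ ρ)) ≠ φ.comp (P ρ)}.Countable := by
  obtain ⟨γ, hγκ, hγ⟩ := hDunion φ hφ
  refine (hP.countable_setOf_comp_succ_ne_inter_Iio hlimit hDstable htight hφ hγκ).mono ?_
  rintro ρ ⟨hρκ, hρJ⟩
  refine ⟨hρJ, mem_Iio.2 (lt_of_not_ge fun hγρ => hρJ ?_)⟩
  rw [hP.comp_eq_of_le hγ (hγρ.trans (le_succ ρ)) hρκ,
    hP.comp_eq_of_le hγ hγρ ((lt_succ ρ).trans hρκ)]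

theorem countable_support_incrementSet {G : Ordinal → Set X} (hP : IsProjectionalChain κ P)
    (hGP : ∀ α < κ, G α ⊆ range (P α)) {D : Set (X →L[ℝ] ℝ)}
    (hDstable : ∀ α, α < κ → ∀ φ ∈ D, φ.comp (P α) ∈ D)
    (hGc : ∀ α < κ, ∀ φ ∈ D, {g ∈ G α | φ g ≠ 0}.Countable) (hκ : 0 < κ)
    {φ : X →L[ℝ] ℝ} (hφ : φ ∈ D)
    (hjumps : {ρ | succ ρ < κ ∧ φ.comp (P (succ ρ)) ≠ φ.comp (P ρ)}.Countable) :
    {a ∈ incrementSet κ P G | φ a ≠ 0}.Countable := by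
  have hsub : {a ∈ incrementSet κ P G | φ a ≠ 0} ⊆ {g ∈ G 0 | φ g ≠ 0} ∪
      ⋃ ρ ∈ {ρ | succ ρ < κ ∧ φ.comp (P (succ ρ)) ≠ φ.comp (P ρ)},
        (fun g => g - P ρ g) '' ({g ∈ G (succ ρ) | φ g ≠ 0} ∪
          {g ∈ G (succ ρ) | φ.comp (P ρ) g ≠ 0}) := by
    rintro a ⟨ha | ha, ha0⟩
    · exact Or.inl ⟨ha, ha0⟩
    obtain ⟨ρ, hρ, g, hg, rfl⟩ := mem_iUnion₂.1 ha
    rw [map_sub, sub_ne_zero] at ha0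
    have hjump : φ.comp (P (succ ρ)) ≠ φ.comp (P ρ) := by
      obtain ⟨y, rfl⟩ := hGP _ hρ hg
      rw [hP.apply_apply_of_lt_left (lt_succ ρ) hρ] at ha0
      exact fun h => ha0 (DFunLike.congr_fun h y)
    refine Or.inr (mem_biUnion ⟨hρ, hjump⟩ ⟨g, ?_, rfl⟩)
    rcases ne_or_eq (φ g) 0 with h | h
    · exact Or.inl ⟨hg, h⟩
    · exact Or.inr ⟨hg, fun h' => ha0 (h.trans h'.symm)⟩
  refine ((hGc 0 hκ φ hφ).union (hjumps.biUnion fun ρ hρ => ?_)).mono hsub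
  exact ((hGc _ hρ.1 φ hφ).union
    (hGc _ hρ.1 _ (hDstable ρ ((lt_succ ρ).trans hρ.1) φ hφ))).image _

end IsProjectionalChain

end

theorem statement11_general {X : Type*} [NormedAddCommGroup X] [NormedSpace ℝ X]
    (κ : Ordinal) (P : Ordinal → X →L[ℝ] X)
    (hseq : ∀ ξ η, ξ < η → η < κ →
      (P ξ).comp (P η) = P ξ ∧ (P η).comp (P ξ) = P ξ)
    (hlimit : ∀ δ, δ < κ → Order.IsSuccLimit δ →
      Set.range (P δ) = closure (⋃ ξ < δ, Set.range (P ξ)))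
    (hcover : closure (⋃ ξ < κ, Set.range (P ξ)) = (Set.univ : Set X))
    (D : Submodule ℝ (X →L[ℝ] ℝ))
    (hDstable : ∀ α, α < κ → ∀ φ ∈ D, φ.comp (P α) ∈ D)
    (hDunion : ∀ φ ∈ D, ∃ α, α < κ ∧ φ.comp (P α) = φ)
    (hPlichko : ∀ α, α < κ →
      IsPlichkoPairOn (Set.range (P α)) {ψ | ∃ φ ∈ D, ψ = φ.comp (P α)})
    (htight : ∀ α, α < κ →
      ∀ A : Set (WeakDual ℝ X),
        A ⊆ StrongDual.toWeakDual '' {ψ | ∃ φ ∈ D, ψ = φ.comp (P α)} →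
      ∀ p ∈ StrongDual.toWeakDual '' {ψ | ∃ φ ∈ D, ψ = φ.comp (P α)},
        p ∈ closure A → ∃ A₀ ⊆ A, A₀.Countable ∧ p ∈ closure A₀) :
    ∃ A : Set X, closure (Submodule.span ℝ A : Set X) = Set.univ ∧
      ∀ φ ∈ D, {a ∈ A | φ a ≠ 0}.Countable := by
  have hP : IsProjectionalChain κ P := hseq
  choose! G hGP hPG hGc using fun η (hη : η < κ) =>
    hP.exists_generating_subset hDstable hDunion hPlichko hη
  refine ⟨incrementSet κ P G, closure_span_incrementSet hlimit hcover hPG, fun φ hφ => ?_⟩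
  obtain ⟨γ, hγκ, -⟩ := hDunion φ hφ
  exact hP.countable_support_incrementSet hGP hDstable hGc (pos_of_gt hγκ) hφ
    (hP.countable_setOf_comp_succ_ne hlimit hDstable hDunion htight hφ)

/-- let `{P α : α < κ}` be a projectional sequence in `X` and let
`D ⊆ X*` be a norming linear subspace with `D = ⋃_{α<κ} P α* D`, such that each
`(P α X, P α* D)` is a Plichko pair and each `P α* D` is weak* countably tight.
Then `(X, D)` is a Plichko pair. -/
theorem statement11 {X : Type*} [NormedAddCommGroup X] [NormedSpace ℝ X] [CompleteSpace X]
    (κ : Ordinal) (P : Ordinal → X →L[ℝ] X)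
    (hseq : ∀ ξ η, ξ < η → η < κ →
      (P ξ).comp (P η) = P ξ ∧ (P η).comp (P ξ) = P ξ)
    (hlimit : ∀ δ, δ < κ → Order.IsSuccLimit δ →
      Set.range (P δ) = closure (⋃ ξ < δ, Set.range (P ξ)))
    (hcover : closure (⋃ ξ < κ, Set.range (P ξ)) = (Set.univ : Set X))
    (D : Submodule ℝ (X →L[ℝ] ℝ))
    (hnorming : ∃ c > (0:ℝ), ∀ x : X,
      c * ‖x‖ ≤ sSup {t : ℝ | ∃ φ ∈ D, φ ≠ 0 ∧ t = |φ x| / ‖φ‖})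
    (hDstable : ∀ α, α < κ → ∀ φ ∈ D, φ.comp (P α) ∈ D)
    (hDunion : ∀ φ ∈ D, ∃ α, α < κ ∧ φ.comp (P α) = φ)
    (hPlichko : ∀ α, α < κ →
      IsPlichkoPairOn (Set.range (P α)) {ψ | ∃ φ ∈ D, ψ = φ.comp (P α)})
    (htight : ∀ α, α < κ →
      ∀ A : Set (WeakDual ℝ X),
        A ⊆ StrongDual.toWeakDual '' {ψ | ∃ φ ∈ D, ψ = φ.comp (P α)} →
      ∀ p ∈ StrongDual.toWeakDual '' {ψ | ∃ φ ∈ D, ψ = φ.comp (P α)},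
        p ∈ closure A → ∃ A₀ ⊆ A, A₀.Countable ∧ p ∈ closure A₀) :
    ∃ A : Set X, closure (Submodule.span ℝ A : Set X) = Set.univ ∧
      ∀ φ ∈ D, {a ∈ A | φ a ≠ 0}.Countable :=
  statement11_general κ P hseq hlimit hcover D hDstable hDunion hPlichko htight
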